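/- (Monotonicity of relative entropy under partial trace) Let ρ and γ be positive definite matrices on ℂ^{d₁} ⊗ ℂ^{d₂} (i.e., (d₁d₂)×(d₁d₂) positive definite complex matrices with rows and columns indexed by pairs (i,j), i ∈ {1,…,d₁}, j ∈ {1,…,d₂}). Let ρ₁ = Tr₂ ρ and γ₁ = Tr₂ γ be their partial traces over the second factor. Then H(ρ₁, γ₁) ≤ H(ρ, γ). -/

import Mathlib

open Matrix
open scoped ComplexOrder

/-- `matFun f A` is `f(A)` for a Hermitian matrix `A`, defined via the spectral
decomposition `A = U diag(λ) U*` as `U diag(f(λ)) U*` (and junk value `0` otherwise). -/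
noncomputable def matFun {n : Type*} [Fintype n] [DecidableEq n]
    (f : ℝ → ℝ) (A : Matrix n n ℂ) : Matrix n n ℂ :=
  if hA : A.IsHermitian then
    (hA.eigenvectorUnitary : Matrix n n ℂ) *
      Matrix.diagonal (fun i => (f (hA.eigenvalues i) : ℂ)) *
      star (hA.eigenvectorUnitary : Matrix n n ℂ)
  else 0

/-- The Umegaki relative entropy `H(A, B) = Tr(A log A − A log B)` of positive definite
matrices (the traced expression is real; we take its real part). -/
noncomputable def relEntropy {n : Type*} [Fintype n] [DecidableEq n]
    (A B : Matrix n n ℂ) : ℝ :=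
  (A * matFun Real.log A - A * matFun Real.log B).trace.re

/-- The partial trace over the second tensor factor. -/
noncomputable def ptrace2 {d₁ d₂ : ℕ}
    (M : Matrix (Fin d₁ × Fin d₂) (Fin d₁ × Fin d₂) ℂ) : Matrix (Fin d₁) (Fin d₁) ℂ :=
  Matrix.of fun i k => ∑ j : Fin d₂, M (i, j) (k, j)

/-!
Let `Δ = γ⁻¹ᵀ ⊗ₖ ρ`, the matrix of the relative modular operator `X ↦ ρ X γ⁻¹` acting on
`vec X`, and `ξ = vec γ^{1/2}`. Then `H(ρ, γ) = ⟪ξ, Δ log Δ ξ⟫`, and likewise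
`H(ρ₁, γ₁) = ⟪ξ₁, Δ₁ log Δ₁ ξ₁⟫`. The map `V (vec Y) = vec ((Y γ₁^{-1/2} ⊗ 1) γ^{1/2})` is an
isometry with `V* Δ V = Δ₁` and `V ξ₁ = ξ`, so the theorem is the Jensen-type inequality
`⟪η, f(V* Δ V) η⟫ ≤ ⟪V η, f(Δ) V η⟫` for `f x = x log x`.

That inequality holds for the resolvents `f x = (x + t)⁻¹`, `t > 0`, because
`X* (Δ + t) X ≥ 0` for `X = (Δ + t)⁻¹ V - V (V* Δ V + t)⁻¹`, and it is an equality for `f x = 1`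
and `f x = x`. It passes to `x log x` through
`x log x = ∫₀^∞ (x / (1 + t) - 1 + t / (x + t)) dt`, with the integral replaced by a monotonicity
argument in `t`.
-/

open scoped Kronecker
open Complex (normSq)

section DotProduct

variable {R K M : Type*} [CommSemiring R] [Fintype K] [Fintype M]

theorem star_mulVec_dotProduct_mulVec_mulVec [StarRing R] (V : Matrix K M R) (A : Matrix K K R)
    (η : M → R) : star (V *ᵥ η) ⬝ᵥ (A *ᵥ (V *ᵥ η)) = star η ⬝ᵥ ((Vᴴ * A * V) *ᵥ η) := by
  rw [star_mulVec, ← dotProduct_mulVec, mulVec_mulVec, mulVec_mulVec, Matrix.mul_assoc]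

theorem star_vec_dotProduct_kronecker_mulVec_vec [StarRing R] (G A B : Matrix K K R) :
    star (vec G) ⬝ᵥ ((Bᵀ ⊗ₖ A) *ᵥ vec G) = (A * (G * B * Gᴴ)).trace := by
  rw [kronecker_mulVec_vec, transpose_transpose, star_vec_dotProduct_vec, trace_mul_comm]
  simp only [Matrix.mul_assoc]

theorem Matrix.ext_of_mulVec_vec {N : Type*} {A B : Matrix N (M × K) R}
    (h : ∀ Y : Matrix K M R, A *ᵥ vec Y = B *ᵥ vec Y) : A = B := by
  refine ext_iff_mulVec.mpr fun v => ?_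
  obtain ⟨Y, rfl⟩ := vec_bijective.surjective v
  exact h Y

end DotProduct

section ConjDiagonal

variable {K L : Type*} [Fintype K] [DecidableEq K] [Fintype L] [DecidableEq L]

/-- Bundled as an algebra hom so that sums, products and scalars of matrices diagonalised by the
same `W` are computed pointwise. -/
noncomputable def conjDiagonal (W : unitaryGroup K ℂ) : (K → ℝ) →ₐ[ℝ] Matrix K K ℂ :=
  ((Unitary.conjStarAlgAut ℝ (Matrix K K ℂ) W : Matrix K K ℂ ≃⋆ₐ[ℝ] Matrix K K ℂ) :
      Matrix K K ℂ →ₐ[ℝ] Matrix K K ℂ).comp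
    ((diagonalAlgHom ℝ).comp (Complex.ofRealAm.compLeft K))

theorem conjDiagonal_apply (W : unitaryGroup K ℂ) (f : K → ℝ) :
    conjDiagonal W f = W * diagonal (fun k => (f k : ℂ)) * star (W : Matrix K K ℂ) :=
  rfl

theorem conjTranspose_conjDiagonal (W : unitaryGroup K ℂ) (f : K → ℝ) :
    (conjDiagonal W f)ᴴ = conjDiagonal W f := by
  simp [conjDiagonal_apply, Matrix.mul_assoc, star_eq_conjTranspose, diagonal_conjTranspose,
    Pi.star_def]

theorem conjDiagonal_add_const (W : unitaryGroup K ℂ) (f : K → ℝ) (t : ℝ) :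
    conjDiagonal W (fun k => f k + t) = conjDiagonal W f + t • 1 := by
  rw [show (fun k => f k + t) = f + algebraMap ℝ (K → ℝ) t from rfl, map_add, AlgHom.commutes,
    Algebra.algebraMap_eq_smul_one]

theorem inv_conjDiagonal (W : unitaryGroup K ℂ) {f : K → ℝ} (hf : ∀ k, f k ≠ 0) :
    (conjDiagonal W f)⁻¹ = conjDiagonal W f⁻¹ := by
  refine inv_eq_left_inv ?_
  rw [← map_mul, ← map_one (conjDiagonal W)]
  congr 1
  ext k
  simp [hf k]

theorem posDef_conjDiagonal (W : unitaryGroup K ℂ) {f : K → ℝ} (hf : ∀ k, 0 < f k) :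
    (conjDiagonal W f).PosDef := by
  rw [conjDiagonal_apply, Unitary.isUnit_coe.posDef_star_right_conjugate_iff]
  simpa using hf

theorem transpose_conjDiagonal (W : unitaryGroup K ℂ) (f : K → ℝ) :
    (conjDiagonal W f)ᵀ = conjDiagonal (UnitaryGroup.map_star W) f := by
  simp [conjDiagonal_apply, Matrix.mul_assoc, star_eq_conjTranspose, conjTranspose, transpose_map,
    Function.comp_def]

def kroneckerUnitary (W : unitaryGroup K ℂ) (W' : unitaryGroup L ℂ) : unitaryGroup (K × L) ℂ :=
  ⟨(W : Matrix K K ℂ) ⊗ₖ (W' : Matrix L L ℂ), kronecker_mem_unitary W.2 W'.2⟩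

theorem conjDiagonal_kronecker (W : unitaryGroup K ℂ) (W' : unitaryGroup L ℂ) (f : K → ℝ)
    (g : L → ℝ) :
    conjDiagonal W f ⊗ₖ conjDiagonal W' g =
      conjDiagonal (kroneckerUnitary W W') (fun p => f p.1 * g p.2) := by
  rw [conjDiagonal_apply, conjDiagonal_apply, conjDiagonal_apply, mul_kronecker_mul,
    mul_kronecker_mul, diagonal_kronecker_diagonal, star_eq_conjTranspose, star_eq_conjTranspose,
    star_eq_conjTranspose, ← conjTranspose_kronecker]
  push_cast
  rfl

theorem dotProduct_conjDiagonal_mulVec (W : unitaryGroup K ℂ) (f : K → ℝ) (x : K → ℂ) :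
    star x ⬝ᵥ (conjDiagonal W f *ᵥ x) =
      ↑(∑ k, normSq ((star (W : Matrix K K ℂ) *ᵥ x) k) * f k) := by
  have hW : star x ᵥ* (W : Matrix K K ℂ) = star (star (W : Matrix K K ℂ) *ᵥ x) := by
    rw [star_mulVec, star_eq_conjTranspose, conjTranspose_conjTranspose]
  rw [conjDiagonal_apply, ← mulVec_mulVec, ← mulVec_mulVec, dotProduct_mulVec, hW]
  simp only [dotProduct, mulVec_diagonal, Pi.star_apply]
  push_cast
  refine Finset.sum_congr rfl fun k _ => ?_
  rw [Complex.normSq_eq_conj_mul_self, RCLike.star_def]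
  ring

end ConjDiagonal

section MatFun

variable {K : Type*} [Fintype K] [DecidableEq K] {A : Matrix K K ℂ}

theorem Matrix.IsHermitian.conjDiagonal_eigenvalues (hA : A.IsHermitian) :
    conjDiagonal hA.eigenvectorUnitary hA.eigenvalues = A :=
  hA.spectral_theorem.symm

theorem Matrix.IsHermitian.matFun_eq (hA : A.IsHermitian) (f : ℝ → ℝ) :
    matFun f A = conjDiagonal hA.eigenvectorUnitary (f ∘ hA.eigenvalues) := by
  rw [matFun, dif_pos hA]
  rfl

theorem Matrix.IsHermitian.matFun_id (hA : A.IsHermitian) : matFun id A = A := by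
  rw [hA.matFun_eq]
  exact hA.conjDiagonal_eigenvalues

theorem Matrix.IsHermitian.matFun_one (hA : A.IsHermitian) : matFun 1 A = 1 := by
  rw [hA.matFun_eq]
  exact map_one _

theorem Matrix.IsHermitian.matFun_mul (hA : A.IsHermitian) (f g : ℝ → ℝ) :
    matFun (f * g) A = matFun f A * matFun g A := by
  simp only [hA.matFun_eq, ← map_mul]
  rfl

theorem Matrix.IsHermitian.conjTranspose_matFun (hA : A.IsHermitian) (f : ℝ → ℝ) :
    (matFun f A)ᴴ = matFun f A := by
  rw [hA.matFun_eq, conjTranspose_conjDiagonal]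

theorem Matrix.PosDef.matFun_congr (hA : A.PosDef) {f g : ℝ → ℝ}
    (hfg : ∀ x, 0 < x → f x = g x) : matFun f A = matFun g A := by
  simp only [hA.1.matFun_eq]
  congr 1
  funext k
  exact hfg _ (hA.eigenvalues_pos k)

theorem Matrix.PosDef.inv_eq (hA : A.PosDef) :
    A⁻¹ = conjDiagonal hA.1.eigenvectorUnitary hA.1.eigenvalues⁻¹ := by
  conv_lhs => rw [← hA.1.conjDiagonal_eigenvalues]
  exact inv_conjDiagonal _ fun k => (hA.eigenvalues_pos k).ne'

theorem Matrix.PosDef.matFun_inv (hA : A.PosDef) : matFun (·⁻¹) A = A⁻¹ := by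
  rw [hA.inv_eq, hA.1.matFun_eq]
  rfl

theorem Matrix.PosDef.sqrt_mul_matFun_mul_sqrt (hA : A.PosDef) (f : ℝ → ℝ) :
    matFun Real.sqrt A * matFun f A * matFun Real.sqrt A = matFun (fun x => x * f x) A := by
  rw [← hA.1.matFun_mul, ← hA.1.matFun_mul]
  refine hA.matFun_congr fun x hx => ?_
  simp only [Pi.mul_apply]
  rw [mul_right_comm, Real.mul_self_sqrt hx.le]

theorem Matrix.PosDef.sqrt_mul_inv_mul_sqrt (hA : A.PosDef) :
    matFun Real.sqrt A * A⁻¹ * matFun Real.sqrt A = 1 := by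
  rw [← hA.matFun_inv, hA.sqrt_mul_matFun_mul_sqrt, ← hA.1.matFun_one]
  exact hA.matFun_congr fun x hx => mul_inv_cancel₀ hx.ne'

theorem Matrix.PosDef.sqrt_mul_sqrt (hA : A.PosDef) :
    matFun Real.sqrt A * matFun Real.sqrt A = A := by
  rw [← hA.1.matFun_mul]
  conv_rhs => rw [← hA.1.matFun_id]
  exact hA.matFun_congr fun x hx => Real.mul_self_sqrt hx.le

theorem Matrix.PosDef.sqrt_mul_inv_sqrt (hA : A.PosDef) :
    matFun Real.sqrt A * matFun (fun x => (√x)⁻¹) A = 1 := by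
  rw [← hA.1.matFun_mul, ← hA.1.matFun_one]
  exact hA.matFun_congr fun x hx => mul_inv_cancel₀ (Real.sqrt_pos.mpr hx).ne'

theorem Matrix.PosDef.inv_sqrt_mul_inv_sqrt (hA : A.PosDef) :
    matFun (fun x => (√x)⁻¹) A * matFun (fun x => (√x)⁻¹) A = A⁻¹ := by
  rw [← hA.1.matFun_mul, ← hA.matFun_inv]
  exact hA.matFun_congr fun x hx => by simp [← mul_inv, Real.mul_self_sqrt hx.le]

theorem Matrix.PosDef.inv_sqrt_mul_mul_inv_sqrt (hA : A.PosDef) :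
    matFun (fun x => (√x)⁻¹) A * A * matFun (fun x => (√x)⁻¹) A = 1 := by
  conv_lhs => enter [1, 2]; rw [← hA.1.matFun_id]
  rw [← hA.1.matFun_mul, ← hA.1.matFun_mul, ← hA.1.matFun_one]
  refine hA.matFun_congr fun x hx => ?_
  simp only [Pi.mul_apply, id, Pi.one_apply]
  rw [mul_right_comm, ← mul_inv, Real.mul_self_sqrt hx.le, inv_mul_cancel₀ hx.ne']

end MatFun

section LogRatioSum

open Filter Topology Real

variable {ι κ : Type*} [Fintype ι] [Fintype κ]

/-- Since `∫ₜ^∞ (x / (1 + s) - x / (x + s)) ds = -x (log (1 + t) - log (x + t))`, this is minus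
the tail from `t` of the integral representation of `∑ i, p i * (x i * log (x i))`. -/
noncomputable def logRatioSum (p x : ι → ℝ) (t : ℝ) : ℝ :=
  ∑ i, p i * x i * (log (1 + t) - log (x i + t))

theorem logRatioSum_zero (p x : ι → ℝ) :
    logRatioSum p x 0 = -∑ i, p i * (x i * log (x i)) := by
  simp [logRatioSum, mul_assoc]

theorem tendsto_log_one_add_sub_log_add {x : ℝ} (hx : 0 < x) :
    Tendsto (fun t => log (1 + t) - log (x + t)) atTop (𝓝 0) := by
  have h : Tendsto (fun t => 1 + (1 - x) / (x + t)) atTop (𝓝 1) := by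
    simpa using tendsto_const_nhds.add
      (tendsto_const_nhds.div_atTop (tendsto_atTop_add_const_left _ x tendsto_id))
  refine (log_one ▸ (continuousAt_log one_ne_zero).tendsto.comp h).congr' ?_
  filter_upwards [eventually_gt_atTop 0] with t ht
  have hxt : x + t ≠ 0 := by positivity
  rw [Function.comp_apply, ← log_div (by positivity) hxt]
  congr 1
  field_simp
  ring

theorem tendsto_logRatioSum {x : ι → ℝ} (hx : ∀ i, 0 < x i) (p : ι → ℝ) :
    Tendsto (logRatioSum p x) atTop (𝓝 0) := by
  have := tendsto_finsetSum Finset.univ fun i _ =>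
    (tendsto_log_one_add_sub_log_add (hx i)).const_mul (p i * x i)
  simp only [mul_zero, Finset.sum_const_zero] at this
  exact this

theorem hasDerivAt_logRatioSum {x : ι → ℝ} (hx : ∀ i, 0 < x i) (p : ι → ℝ) {t : ℝ}
    (ht : 0 ≤ t) :
    HasDerivAt (logRatioSum p x)
      ((∑ i, p i * x i) / (1 + t) - ∑ i, p i + t * ∑ i, p i * (x i + t)⁻¹) t := by
  have h1t : 1 + t ≠ 0 := by positivity
  have hxt (i : ι) : x i + t ≠ 0 := (add_pos_of_pos_of_nonneg (hx i) ht).ne'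
  have hterm (i : ι) : HasDerivAt (fun s => p i * x i * (log (1 + s) - log (x i + s)))
      (p i * x i * ((1 + t)⁻¹ - (x i + t)⁻¹)) t := by
    have h1 := ((hasDerivAt_id t).const_add 1).log h1t
    have h2 := ((hasDerivAt_id t).const_add (x i)).log (hxt i)
    simpa using (h1.sub h2).const_mul (p i * x i)
  refine (HasDerivAt.fun_sum fun i _ => hterm i).congr_deriv ?_
  rw [Finset.sum_div, Finset.mul_sum, ← Finset.sum_sub_distrib, ← Finset.sum_add_distrib]
  refine Finset.sum_congr rfl fun i _ => ?_
  field_simp [hxt i]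
  ring

theorem sum_mul_mul_log_le_of_sum_mul_inv_le {p x : ι → ℝ} {q y : κ → ℝ}
    (hx : ∀ i, 0 < x i) (hy : ∀ j, 0 < y j)
    (h_mass : ∑ j, q j = ∑ i, p i) (h_mean : ∑ j, q j * y j = ∑ i, p i * x i)
    (h_res : ∀ t, 0 < t → ∑ j, q j * (y j + t)⁻¹ ≤ ∑ i, p i * (x i + t)⁻¹) :
    ∑ j, q j * (y j * log (y j)) ≤ ∑ i, p i * (x i * log (x i)) := by
  set F := fun t => logRatioSum p x t - logRatioSum q y t
  have hF (t : ℝ) (ht : 0 ≤ t) :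
      HasDerivAt F (t * (∑ i, p i * (x i + t)⁻¹ - ∑ j, q j * (y j + t)⁻¹)) t := by
    refine ((hasDerivAt_logRatioSum hx p ht).sub
      (hasDerivAt_logRatioSum hy q ht)).congr_deriv ?_
    rw [h_mass, h_mean]
    ring
  have hmono : MonotoneOn F (Set.Ici 0) := by
    refine monotoneOn_of_deriv_nonneg (convex_Ici 0)
      (fun t ht => (hF t ht).continuousAt.continuousWithinAt) (fun t ht => ?_) fun t ht => ?_ <;>
      rw [interior_Ici] at ht
    · exact (hF t ht.le).differentiableAt.differentiableWithinAt
    · rw [(hF t ht.le).deriv]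
      exact mul_nonneg ht.le (sub_nonneg.mpr (h_res t ht))
  have hF0 : F 0 ≤ 0 := by
    refine ge_of_tendsto ((tendsto_logRatioSum hx p).sub (tendsto_logRatioSum hy q) |>.trans ?_) ?_
    · simp
    filter_upwards [eventually_ge_atTop 0] with t ht
    exact hmono Set.self_mem_Ici ht ht
  simp only [F, logRatioSum_zero] at hF0
  linarith

end LogRatioSum

section Resolvent

variable {𝕜 K M : Type*} [RCLike 𝕜] [Fintype K] [DecidableEq K] [Fintype M] [DecidableEq M]

theorem Matrix.PosDef.posSemidef_conjTranspose_mul_inv_mul_sub_inv {A : Matrix K K 𝕜}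
    (hA : A.PosDef) {V : Matrix K M 𝕜} (hV : Vᴴ * V = 1) :
    (Vᴴ * A⁻¹ * V - (Vᴴ * A * V)⁻¹).PosSemidef := by
  set B := Vᴴ * A * V
  have hB : B.PosDef := hA.conjTranspose_mul_mul_same fun x y h => by
    simpa [mulVec_mulVec, hV] using congrArg (Vᴴ *ᵥ ·) h
  have hAdet := (isUnit_iff_isUnit_det A).mp hA.isUnit
  have hBdet := (isUnit_iff_isUnit_det B).mp hB.isUnit
  have hVV (Y : Matrix M M 𝕜) : Vᴴ * (V * Y) = Y := by
    rw [← Matrix.mul_assoc, hV, Matrix.one_mul]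
  have hVAV (Y : Matrix M M 𝕜) : Vᴴ * (A * (V * Y)) = B * Y := by
    simp only [B, Matrix.mul_assoc]
  have hXAX : (A⁻¹ * V - V * B⁻¹)ᴴ * A * (A⁻¹ * V - V * B⁻¹) = Vᴴ * A⁻¹ * V - B⁻¹ := by
    rw [conjTranspose_sub, conjTranspose_mul, conjTranspose_mul, hA.1.inv.eq, hB.1.inv.eq]
    simp only [Matrix.sub_mul, Matrix.mul_sub, Matrix.mul_assoc, hV, hVV, hVAV,
      nonsing_inv_mul_cancel_left _ _ hAdet, nonsing_inv_mul_cancel_left _ _ hBdet,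
      mul_nonsing_inv_cancel_left _ _ hAdet, Matrix.mul_one]
    abel
  rw [← hXAX]
  exact hA.posSemidef.conjTranspose_mul_mul_same _

end Resolvent

section Jensen

variable {K M : Type*} [Fintype K] [DecidableEq K] [Fintype M] [DecidableEq M]

open Real in
theorem re_dotProduct_conjDiagonal_mul_log_le {W : unitaryGroup K ℂ} {x : K → ℝ}
    {W' : unitaryGroup M ℂ} {y : M → ℝ} (hx : ∀ k, 0 < x k) (hy : ∀ m, 0 < y m)
    {V : Matrix K M ℂ} (hV : Vᴴ * V = 1)
    (hVAV : Vᴴ * conjDiagonal W x * V = conjDiagonal W' y) (η : M → ℂ) :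
    (star η ⬝ᵥ (conjDiagonal W' (fun m => y m * log (y m)) *ᵥ η)).re ≤
      (star (V *ᵥ η) ⬝ᵥ (conjDiagonal W (fun k => x k * log (x k)) *ᵥ (V *ᵥ η))).re := by
  simp only [dotProduct_conjDiagonal_mulVec, Complex.ofReal_re]
  refine sum_mul_mul_log_le_of_sum_mul_inv_le hx hy ?_ ?_ fun t ht => ?_
  · have h := star_mulVec_dotProduct_mulVec_mulVec V 1 η
    rw [Matrix.mul_one, hV, ← map_one (conjDiagonal W), ← map_one (conjDiagonal W'),
      dotProduct_conjDiagonal_mulVec, dotProduct_conjDiagonal_mulVec] at h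
    simp only [Pi.one_apply, mul_one] at h
    exact_mod_cast h.symm
  · have h := star_mulVec_dotProduct_mulVec_mulVec V (conjDiagonal W x) η
    rw [hVAV, dotProduct_conjDiagonal_mulVec, dotProduct_conjDiagonal_mulVec] at h
    exact_mod_cast h.symm
  · have hxt (k : K) : 0 < x k + t := add_pos (hx k) ht
    have hyt (m : M) : 0 < y m + t := add_pos (hy m) ht
    have hshift : Vᴴ * conjDiagonal W (fun k => x k + t) * V =
        conjDiagonal W' (fun m => y m + t) := by
      rw [conjDiagonal_add_const, conjDiagonal_add_const, Matrix.mul_add, Matrix.add_mul, hVAV,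
        Matrix.mul_smul, Matrix.smul_mul, Matrix.mul_one, hV]
    have hres := (posDef_conjDiagonal W hxt).posSemidef_conjTranspose_mul_inv_mul_sub_inv hV
    rw [hshift, inv_conjDiagonal _ fun k => (hxt k).ne', inv_conjDiagonal _ fun m => (hyt m).ne']
      at hres
    have h := hres.dotProduct_mulVec_nonneg η
    rw [sub_mulVec, dotProduct_sub, ← star_mulVec_dotProduct_mulVec_mulVec,
      dotProduct_conjDiagonal_mulVec, dotProduct_conjDiagonal_mulVec, sub_nonneg] at h
    exact_mod_cast h

end Jensen

section Modular

variable {K : Type*} [Fintype K] [DecidableEq K] {ρ γ : Matrix K K ℂ}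

noncomputable def modularUnitary (hρ : ρ.IsHermitian) (hγ : γ.IsHermitian) :
    unitaryGroup (K × K) ℂ :=
  kroneckerUnitary (UnitaryGroup.map_star hγ.eigenvectorUnitary) hρ.eigenvectorUnitary

noncomputable def modularEigenvalues (hρ : ρ.IsHermitian) (hγ : γ.IsHermitian) : K × K → ℝ :=
  fun p => (hγ.eigenvalues p.1)⁻¹ * hρ.eigenvalues p.2

theorem modularEigenvalues_pos (hρ : ρ.PosDef) (hγ : γ.PosDef) (p : K × K) :
    0 < modularEigenvalues hρ.1 hγ.1 p :=
  mul_pos (inv_pos.mpr (hγ.eigenvalues_pos _)) (hρ.eigenvalues_pos _)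

theorem conjDiagonal_modularEigenvalues (hρ : ρ.PosDef) (hγ : γ.PosDef) :
    conjDiagonal (modularUnitary hρ.1 hγ.1) (modularEigenvalues hρ.1 hγ.1) = γ⁻¹ᵀ ⊗ₖ ρ := by
  calc _ = (conjDiagonal hγ.1.eigenvectorUnitary hγ.1.eigenvalues⁻¹)ᵀ ⊗ₖ
        conjDiagonal hρ.1.eigenvectorUnitary hρ.1.eigenvalues := by
        rw [transpose_conjDiagonal, conjDiagonal_kronecker]
        rfl
    _ = γ⁻¹ᵀ ⊗ₖ ρ := by rw [← hγ.inv_eq, hρ.1.conjDiagonal_eigenvalues]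

open Real in
theorem conjDiagonal_log_modularEigenvalues (hρ : ρ.PosDef) (hγ : γ.PosDef) :
    conjDiagonal (modularUnitary hρ.1 hγ.1) (log ∘ modularEigenvalues hρ.1 hγ.1) =
      1 ⊗ₖ matFun log ρ - (matFun log γ)ᵀ ⊗ₖ 1 := by
  have hleft : (1 : Matrix K K ℂ) ⊗ₖ matFun log ρ =
      conjDiagonal (modularUnitary hρ.1 hγ.1) (fun p => 1 * log (hρ.1.eigenvalues p.2)) := by
    rw [hρ.1.matFun_eq, ← map_one (conjDiagonal (UnitaryGroup.map_star hγ.1.eigenvectorUnitary)),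
      conjDiagonal_kronecker]
    rfl
  have hright : (matFun log γ)ᵀ ⊗ₖ (1 : Matrix K K ℂ) =
      conjDiagonal (modularUnitary hρ.1 hγ.1) (fun p => log (hγ.1.eigenvalues p.1) * 1) := by
    rw [hγ.1.matFun_eq, transpose_conjDiagonal, ← map_one (conjDiagonal hρ.1.eigenvectorUnitary),
      conjDiagonal_kronecker]
    rfl
  rw [hleft, hright, ← map_sub]
  congr 1
  funext p
  simp only [modularEigenvalues, Function.comp_apply, one_mul, mul_one, Pi.sub_apply]
  rw [log_mul (inv_pos.mpr (hγ.eigenvalues_pos _)).ne' (hρ.eigenvalues_pos _).ne', log_inv]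
  ring

open Real in
theorem relEntropy_eq_re_dotProduct (hρ : ρ.PosDef) (hγ : γ.PosDef) :
    relEntropy ρ γ = (star (vec (matFun sqrt γ)) ⬝ᵥ
      (conjDiagonal (modularUnitary hρ.1 hγ.1)
        (fun p => modularEigenvalues hρ.1 hγ.1 p * log (modularEigenvalues hρ.1 hγ.1 p)) *ᵥ
          vec (matFun sqrt γ))).re := by
  have h_log : matFun sqrt γ * (matFun log γ * γ⁻¹) * matFun sqrt γ = matFun log γ := by
    rw [← hγ.matFun_inv, ← hγ.1.matFun_mul, hγ.sqrt_mul_matFun_mul_sqrt]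
    refine hγ.matFun_congr fun x hx => ?_
    simp only [Pi.mul_apply]
    field_simp
  rw [show (fun p => modularEigenvalues hρ.1 hγ.1 p * log (modularEigenvalues hρ.1 hγ.1 p)) =
      modularEigenvalues hρ.1 hγ.1 * (log ∘ modularEigenvalues hρ.1 hγ.1) from rfl, map_mul,
    conjDiagonal_modularEigenvalues hρ hγ, conjDiagonal_log_modularEigenvalues hρ hγ,
    Matrix.mul_sub, ← mul_kronecker_mul, ← mul_kronecker_mul, Matrix.mul_one, Matrix.mul_one,
    ← transpose_mul, sub_mulVec, dotProduct_sub, star_vec_dotProduct_kronecker_mulVec_vec,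
    star_vec_dotProduct_kronecker_mulVec_vec, hγ.1.conjTranspose_matFun,
    hγ.sqrt_mul_inv_mul_sqrt, h_log, Matrix.mul_one, relEntropy, trace_sub]

end Modular

section PartialTrace

variable {d₁ d₂ : ℕ}

theorem ptrace2_eq_sum_submatrix (X : Matrix (Fin d₁ × Fin d₂) (Fin d₁ × Fin d₂) ℂ) :
    ptrace2 X = ∑ j, X.submatrix (·, j) (·, j) := by
  ext i k
  simp [ptrace2, Matrix.sum_apply]

theorem Matrix.PosDef.ptrace2 [NeZero d₂] {X : Matrix (Fin d₁ × Fin d₂) (Fin d₁ × Fin d₂) ℂ}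
    (hX : X.PosDef) : (ptrace2 X).PosDef := by
  rw [ptrace2_eq_sum_submatrix]
  exact posDef_sum Finset.univ_nonempty fun j _ => hX.submatrix (Prod.mk_left_injective j)

theorem ptrace2_kronecker_one_mul (Y : Matrix (Fin d₁) (Fin d₁) ℂ)
    (X : Matrix (Fin d₁ × Fin d₂) (Fin d₁ × Fin d₂) ℂ) :
    ptrace2 ((Y ⊗ₖ 1) * X) = Y * ptrace2 X := by
  ext i k
  simp only [ptrace2, mul_apply, kroneckerMap_apply, one_apply, mul_ite, mul_one, mul_zero, ite_mul,
    zero_mul, Fintype.sum_prod_type, Finset.sum_ite_eq, Finset.mem_univ, ↓reduceIte, of_apply,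
    Finset.mul_sum]
  exact Finset.sum_comm

theorem ptrace2_mul_kronecker_one (X : Matrix (Fin d₁ × Fin d₂) (Fin d₁ × Fin d₂) ℂ)
    (Y : Matrix (Fin d₁) (Fin d₁) ℂ) :
    ptrace2 (X * (Y ⊗ₖ 1)) = ptrace2 X * Y := by
  ext i k
  simp only [ptrace2, mul_apply, kroneckerMap_apply, one_apply, mul_ite, mul_one, mul_zero,
    Fintype.sum_prod_type, Finset.sum_ite_eq', Finset.mem_univ, ↓reduceIte, of_apply,
    Finset.sum_mul]
  exact Finset.sum_comm

def kroneckerOneMulOp {m n p : Type*} [DecidableEq m] (M : Matrix (m × n) p ℂ) :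
    Matrix (p × (m × n)) (m × m) ℂ :=
  of fun P c => if c.2 = P.2.1 then M (c.1, P.2.2) P.1 else 0

theorem kroneckerOneMulOp_mulVec_vec {m n p : Type*} [Fintype m] [Fintype n]
    [DecidableEq m] [DecidableEq n] (M : Matrix (m × n) p ℂ) (Y : Matrix m m ℂ) :
    kroneckerOneMulOp M *ᵥ vec Y = vec ((Y ⊗ₖ (1 : Matrix n n ℂ)) * M) := by
  ext ⟨q, i, j⟩
  change _ = ((Y ⊗ₖ (1 : Matrix n n ℂ)) * M : Matrix (m × n) p ℂ) (i, j) q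
  rw [mul_apply, Fintype.sum_prod_type]
  simp [kroneckerOneMulOp, mulVec, dotProduct, Fintype.sum_prod_type, one_apply, mul_comm]

theorem conjTranspose_kroneckerOneMulOp_mulVec_vec {p : Type*} [Fintype p]
    (M Z : Matrix (Fin d₁ × Fin d₂) p ℂ) :
    (kroneckerOneMulOp M)ᴴ *ᵥ vec Z = vec (ptrace2 (Z * Mᴴ)) := by
  ext ⟨c, a⟩
  simp only [mulVec, dotProduct, kroneckerOneMulOp, conjTranspose_apply, of_apply, RCLike.star_def,
    apply_ite (starRingEnd ℂ), map_zero, vec, ite_mul, zero_mul, Fintype.sum_prod_type,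
    Finset.sum_ite_irrel, Finset.sum_const_zero, Finset.sum_ite_eq, Finset.mem_univ, ↓reduceIte,
    ptrace2, mul_apply]
  rw [Finset.sum_comm]
  simp [mul_comm]

theorem conjTranspose_kroneckerOneMulOp_mul_self {p : Type*} [Fintype p]
    (M : Matrix (Fin d₁ × Fin d₂) p ℂ) :
    (kroneckerOneMulOp M)ᴴ * kroneckerOneMulOp M = (ptrace2 (M * Mᴴ))ᵀ ⊗ₖ 1 := by
  refine ext_of_mulVec_vec fun Y => ?_
  rw [← mulVec_mulVec, kroneckerOneMulOp_mulVec_vec, conjTranspose_kroneckerOneMulOp_mulVec_vec,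
    kronecker_mulVec_vec, transpose_transpose, Matrix.one_mul, Matrix.mul_assoc,
    ptrace2_kronecker_one_mul]

theorem conjTranspose_kroneckerOneMulOp_mul_kronecker_mul {p : Type*} [Fintype p]
    {M : Matrix (Fin d₁ × Fin d₂) p ℂ} {B : Matrix p p ℂ} {C : Matrix (Fin d₁) (Fin d₁) ℂ}
    (hM : M * B * Mᴴ = C ⊗ₖ 1) (A : Matrix (Fin d₁ × Fin d₂) (Fin d₁ × Fin d₂) ℂ) :
    (kroneckerOneMulOp M)ᴴ * (Bᵀ ⊗ₖ A) * kroneckerOneMulOp M = Cᵀ ⊗ₖ ptrace2 A := by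
  refine ext_of_mulVec_vec fun Y => ?_
  rw [← mulVec_mulVec, ← mulVec_mulVec, kroneckerOneMulOp_mulVec_vec, kronecker_mulVec_vec,
    transpose_transpose, conjTranspose_kroneckerOneMulOp_mulVec_vec, kronecker_mulVec_vec,
    transpose_transpose]
  simp only [Matrix.mul_assoc]
  rw [← Matrix.mul_assoc M, hM, ← mul_kronecker_mul, Matrix.mul_one, ptrace2_mul_kronecker_one]

open Real in
theorem exists_isometry_ptrace2 [NeZero d₂] (ρ : Matrix (Fin d₁ × Fin d₂) (Fin d₁ × Fin d₂) ℂ)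
    {γ : Matrix (Fin d₁ × Fin d₂) (Fin d₁ × Fin d₂) ℂ} (hγ : γ.PosDef) :
    ∃ V : Matrix ((Fin d₁ × Fin d₂) × (Fin d₁ × Fin d₂)) (Fin d₁ × Fin d₁) ℂ,
      Vᴴ * V = 1 ∧ Vᴴ * (γ⁻¹ᵀ ⊗ₖ ρ) * V = (ptrace2 γ)⁻¹ᵀ ⊗ₖ ptrace2 ρ ∧
        V *ᵥ vec (matFun sqrt (ptrace2 γ)) = vec (matFun sqrt γ) := by
  have hγ₁ := hγ.ptrace2
  have hG : (matFun sqrt γ)ᴴ = matFun sqrt γ := hγ.1.conjTranspose_matFun _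
  have hN : (matFun (fun x => (√x)⁻¹) (ptrace2 γ))ᴴ = matFun (fun x => (√x)⁻¹) (ptrace2 γ) :=
    hγ₁.1.conjTranspose_matFun _
  refine ⟨kroneckerOneMulOp ((matFun (fun x => (√x)⁻¹) (ptrace2 γ) ⊗ₖ 1) * matFun sqrt γ),
    ?_, ?_, ?_⟩
  · rw [conjTranspose_kroneckerOneMulOp_mul_self, conjTranspose_mul, conjTranspose_kronecker, hG,
      hN, conjTranspose_one]
    simp only [Matrix.mul_assoc]
    rw [← Matrix.mul_assoc (matFun sqrt γ), hγ.sqrt_mul_sqrt, ptrace2_kronecker_one_mul,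
      ptrace2_mul_kronecker_one, ← Matrix.mul_assoc, hγ₁.inv_sqrt_mul_mul_inv_sqrt, transpose_one,
      one_kronecker_one]
  · refine conjTranspose_kroneckerOneMulOp_mul_kronecker_mul ?_ ρ
    rw [conjTranspose_mul, conjTranspose_kronecker, hG, hN, conjTranspose_one]
    simp only [Matrix.mul_assoc]
    rw [← Matrix.mul_assoc (matFun sqrt γ), ← Matrix.mul_assoc (matFun sqrt γ * γ⁻¹),
      hγ.sqrt_mul_inv_mul_sqrt, Matrix.one_mul, ← mul_kronecker_mul, hγ₁.inv_sqrt_mul_inv_sqrt,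
      Matrix.mul_one]
  · rw [kroneckerOneMulOp_mulVec_vec, ← Matrix.mul_assoc, ← mul_kronecker_mul,
      hγ₁.sqrt_mul_inv_sqrt, Matrix.one_mul, one_kronecker_one, Matrix.one_mul]

end PartialTrace

/-- **Monotonicity of relative entropy under partial trace.**  For positive definite
matrices `ρ, γ` on `ℂ^(d₁) ⊗ ℂ^(d₂)`, `H(ρ₁, γ₁) ≤ H(ρ, γ)` where `ρ₁ = Tr₂ ρ`,
`γ₁ = Tr₂ γ`. -/
theorem relEntropy_ptrace2_le {d₁ d₂ : ℕ}
    (ρ γ : Matrix (Fin d₁ × Fin d₂) (Fin d₁ × Fin d₂) ℂ)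
    (hρ : ρ.PosDef) (hγ : γ.PosDef) :
    relEntropy (ptrace2 ρ) (ptrace2 γ) ≤ relEntropy ρ γ := by
  obtain rfl | hd₂ := Nat.eq_zero_or_pos d₂
  · simp [relEntropy, ptrace2, trace]
  have : NeZero d₂ := ⟨hd₂.ne'⟩
  obtain ⟨V, hV, hVΔV, hVξ⟩ := exists_isometry_ptrace2 ρ hγ
  rw [relEntropy_eq_re_dotProduct hρ hγ, relEntropy_eq_re_dotProduct hρ.ptrace2 hγ.ptrace2, ← hVξ]
  refine re_dotProduct_conjDiagonal_mul_log_le (modularEigenvalues_pos hρ hγ)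
    (modularEigenvalues_pos hρ.ptrace2 hγ.ptrace2) hV ?_ _
  rw [conjDiagonal_modularEigenvalues hρ hγ, conjDiagonal_modularEigenvalues hρ.ptrace2 hγ.ptrace2,
    hVΔV]
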